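/- arXiv:1311.5871 — 8 statements merged into one kernel-verified Lean document; each statement's English description precedes it below -/
import Mathlib

section
/- Let n, d be positive integers, let s be an integer with 0 ≤ s ≤ n, let M = ∑_{q=1}^{d} C(n+q-1, q) and let P(s) = ∑_{q=1}^{d} C(s+q-1, q). Then P(s)/M ≤ s/n, i.e., n * P(s) ≤ s * M. -/
/-
The inequality holds summand by summand: writing `q = r + 1`, we have
`C(s+r, r+1) = s/(r+1) · C(s+r, r)`, so `C(s+r, r+1)/s = C(s+r, r)/(r+1)` is monotone in `s`.
-/

lemma Nat.choose_add_succ_mul (s r : ℕ) :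
    (s + r).choose (r + 1) * (r + 1) = (s + r).choose r * s := by
  rw [Nat.choose_succ_right_eq, Nat.add_sub_cancel]

lemma Nat.mul_choose_add_succ_le {s n : ℕ} (hs : s ≤ n) (r : ℕ) :
    n * (s + r).choose (r + 1) ≤ s * (n + r).choose (r + 1) := by
  refine Nat.le_of_mul_le_mul_right ?_ r.succ_pos
  calc n * (s + r).choose (r + 1) * (r + 1)
      = n * s * (s + r).choose r := by rw [mul_assoc, Nat.choose_add_succ_mul]; ring
    _ ≤ n * s * (n + r).choose r := by gcongr
    _ = s * (n + r).choose (r + 1) * (r + 1) := by rw [mul_assoc s, Nat.choose_add_succ_mul]; ring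

theorem lifted_sparsity_bound_general (n d s : ℕ) (hs : s ≤ n) :
    n * ∑ q ∈ Finset.Icc 1 d, Nat.choose (s + q - 1) q ≤
      s * ∑ q ∈ Finset.Icc 1 d, Nat.choose (n + q - 1) q := by
  rw [Finset.mul_sum, Finset.mul_sum]
  refine Finset.sum_le_sum fun q hq => ?_
  obtain ⟨r, rfl⟩ : ∃ r, q = r + 1 := ⟨q - 1, by grind⟩
  simpa only [Nat.add_succ_sub_one] using Nat.mul_choose_add_succ_le hs r

theorem lifted_sparsity_bound (n d s : ℕ) (hn : 0 < n) (hd : 0 < d) (hs : s ≤ n) :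
    n * ∑ q ∈ Finset.Icc 1 d, Nat.choose (s + q - 1) q ≤
      s * ∑ q ∈ Finset.Icc 1 d, Nat.choose (n + q - 1) q :=
  lifted_sparsity_bound_general n d s hs
end

section
/- Let x ∈ ℝ^n and let φ(x) ∈ ℝ^M be the vector of all monomials x^α with 1 ≤ |α| ≤ d, where M = ∑_{q=1}^{d} C(n+q-1, q). Then the number of nonzero entries of φ(x) satisfies ‖φ(x)‖_0 / M ≤ ‖x‖_0 / n. -/
/-!
A monomial `x^α` is nonzero iff the support of `α` lies in the support `K` of `x`, so the nonzero
monomials of degree `q` are counted by `multichoose #K q`. For `q ≥ 1` the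
ratio `multichoose k q / k` is monotone in `k`, because
`q * multichoose k q = k * multichoose (k + 1) (q - 1)`; summing over `1 ≤ q ≤ d` gives
the claim.
-/

open Finset

namespace Finset

theorem card_sym {α : Type*} [DecidableEq α] (s : Finset α) (n : ℕ) :
    #(s.sym n) = Nat.multichoose #s n := by
  conv_lhs => rw [← s.attach_map_val, sym_map, card_map, ← univ_eq_attach, sym_univ]
  rw [card_univ, Sym.card_sym_eq_multichoose, Fintype.card_coe]

theorem card_piAntidiag {ι : Type*} [DecidableEq ι] (s : Finset ι) (n : ℕ) :
    #(piAntidiag s n) = Nat.multichoose #s n := by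
  rw [← map_sym_eq_piAntidiag, card_map, card_sym]

theorem prod_pow_ne_zero_iff {ι M₀ : Type*} [CommMonoidWithZero M₀] [NoZeroDivisors M₀]
    [Nontrivial M₀] (s : Finset ι) (x : ι → M₀) (α : ι → ℕ) :
    ∏ j ∈ s, x j ^ α j ≠ 0 ↔ ∀ j ∈ s, α j ≠ 0 → x j ≠ 0 := by
  simp [prod_ne_zero_iff, pow_eq_zero_iff', not_imp_not]

end Finset

namespace Nat

theorem multichoose_succ_mul (k r : ℕ) :
    k.multichoose (r + 1) * (r + 1) = k * (k + 1).multichoose r := by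
  rw [multichoose_eq, multichoose_eq, show k + (r + 1) - 1 = k + r by omega,
    show k + 1 + r - 1 = k + r by omega, choose_succ_right_eq, Nat.add_sub_cancel, mul_comm]

theorem multichoose_le_multichoose {k n : ℕ} (r : ℕ) (hkn : k ≤ n) :
    k.multichoose r ≤ n.multichoose r := by
  rw [multichoose_eq, multichoose_eq]
  exact choose_le_choose r (by omega)

theorem mul_multichoose_le_mul_multichoose {k n q : ℕ} (hkn : k ≤ n) (hq : q ≠ 0) :
    n * k.multichoose q ≤ k * n.multichoose q := by
  obtain ⟨r, rfl⟩ := exists_eq_succ_of_ne_zero hq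
  refine le_of_mul_le_mul_right ?_ r.succ_pos
  calc n * k.multichoose (r + 1) * (r + 1) = n * k * (k + 1).multichoose r := by
        rw [mul_assoc, multichoose_succ_mul, mul_assoc]
    _ ≤ n * k * (n + 1).multichoose r := by gcongr; exact multichoose_le_multichoose r (by omega)
    _ = k * n.multichoose (r + 1) * (r + 1) := by rw [mul_assoc k, multichoose_succ_mul]; ring

end Nat

def monomialExponents (ι : Type*) [Fintype ι] [DecidableEq ι] (d : ℕ) : Finset (ι → ℕ) :=
  {α ∈ Fintype.piFinset fun _ => range (d + 1) | 1 ≤ ∑ j, α j ∧ ∑ j, α j ≤ d}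

section MonomialExponents

variable {ι : Type*} [Fintype ι] [DecidableEq ι]

theorem filter_monomialExponents_support_subset (d : ℕ) (K : Finset ι) :
    {α ∈ monomialExponents ι d | ∀ j, α j ≠ 0 → j ∈ K} =
      (Icc 1 d).biUnion (piAntidiag K) := by
  ext α
  simp only [monomialExponents, mem_filter, Fintype.mem_piFinset, mem_range, mem_biUnion, mem_Icc,
    mem_piAntidiag]
  constructor
  · rintro ⟨⟨-, hpos, hle⟩, hsupp⟩
    exact ⟨∑ j, α j, ⟨hpos, hle⟩, Fintype.sum_subset hsupp, hsupp⟩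
  · rintro ⟨q, ⟨hpos, hle⟩, rfl, hsupp⟩
    rw [Fintype.sum_subset hsupp] at hpos hle
    exact ⟨⟨fun j => Nat.lt_succ_of_le ((single_le_sum (by simp) (mem_univ j)).trans hle), hpos,
      hle⟩, hsupp⟩

theorem card_filter_monomialExponents_support_subset (d : ℕ) (K : Finset ι) :
    #{α ∈ monomialExponents ι d | ∀ j, α j ≠ 0 → j ∈ K} =
      ∑ q ∈ Icc 1 d, Nat.multichoose #K q := by
  rw [filter_monomialExponents_support_subset, card_biUnion]
  · simp_rw [card_piAntidiag]
  · intro p _ q _ hpq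
    simp only [Function.onFun, disjoint_left, mem_piAntidiag]
    rintro α ⟨rfl, -⟩ ⟨h, -⟩
    exact hpq h

theorem card_monomialExponents (d : ℕ) :
    #(monomialExponents ι d) = ∑ q ∈ Icc 1 d, Nat.multichoose (Fintype.card ι) q := by
  simpa using card_filter_monomialExponents_support_subset (ι := ι) d univ

theorem card_filter_monomialExponents_prod_pow_ne_zero {M₀ : Type*} [CommMonoidWithZero M₀]
    [NoZeroDivisors M₀] [Nontrivial M₀] [DecidableEq M₀] (d : ℕ) (x : ι → M₀) :
    #{α ∈ monomialExponents ι d | ∏ j, x j ^ α j ≠ 0} =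
      ∑ q ∈ Icc 1 d, Nat.multichoose #{j | x j ≠ 0} q := by
  rw [← card_filter_monomialExponents_support_subset]
  congr 1
  exact filter_congr fun α _ => by simp [prod_pow_ne_zero_iff]

end MonomialExponents

theorem monomial_lift_sparsity_general (n d : ℕ)
    (x : Fin n → ℝ) :
    let S : Finset (Fin n → ℕ) :=
      (Fintype.piFinset fun _ => Finset.range (d + 1)).filter
        (fun α => 1 ≤ ∑ j, α j ∧ ∑ j, α j ≤ d)
    n * (S.filter (fun α => (∏ j, x j ^ α j) ≠ 0)).card ≤
      (Finset.univ.filter (fun j => x j ≠ 0)).card * S.card := by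
  intro S
  have hS : S = monomialExponents (Fin n) d := rfl
  have hsupport : #{j | x j ≠ 0} ≤ n := (card_le_univ _).trans_eq (Fintype.card_fin n)
  rw [hS, card_filter_monomialExponents_prod_pow_ne_zero, card_monomialExponents,
    Fintype.card_fin, mul_sum, mul_sum]
  exact sum_le_sum fun q hq =>
    Nat.mul_multichoose_le_mul_multichoose hsupport (Nat.one_le_iff_ne_zero.mp (mem_Icc.mp hq).1)

/-- The monomial lifting of `x` is at least as (relatively) sparse as `x`:
`‖φ(x)‖₀ / M ≤ ‖x‖₀ / n`, where `φ(x)` is the vector of monomials `x^α`,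
`1 ≤ |α| ≤ d`. -/
theorem monomial_lift_sparsity (n d : ℕ) (hn : 0 < n) (hd : 0 < d)
    (x : Fin n → ℝ) :
    let S : Finset (Fin n → ℕ) :=
      (Fintype.piFinset fun _ => Finset.range (d + 1)).filter
        (fun α => 1 ≤ ∑ j, α j ∧ ∑ j, α j ≤ d)
    n * (S.filter (fun α => (∏ j, x j ^ α j) ≠ 0)).card ≤
      (Finset.univ.filter (fun j => x j ≠ 0)).card * S.card :=
  monomial_lift_sparsity_general n d x
end

section
/- For all positive integers a, b, d with a ≥ d(b+d), the inequality (1/a) ∑_{q=2}^{d} C(a+q-1, q) ≥ (d/b) ∑_{q=2}^{d} C(b+q-1, q) holds (equivalently, b ∑_{q=2}^{d} C(a+q-1, q) ≥ a d ∑_{q=2}^{d} C(b+q-1, q)). -/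
/-! Termwise: with `x^(q)` the rising factorial, `C(x + q - 1, q) = x^(q) / q!`, and splitting off the
first two factors, `a^(q) / b^(q) = a (a + 1) / (b (b + 1)) * (a + 2)^(q-2) / (b + 2)^(q-2)`, which is
at least `(a / b) * d` as soon as `d (b + 1) ≤ a + 1` and `b ≤ a`. -/

namespace Nat

theorem mul_mul_ascFactorial_add_two_le {a b c : ℕ} (hc : c * (b + 1) ≤ a + 1) (hba : b ≤ a)
    (k : ℕ) : a * c * b.ascFactorial (k + 2) ≤ b * a.ascFactorial (k + 2) := by
  have split (n : ℕ) : n.ascFactorial (k + 2) = n * (n + 1) * (n + 2).ascFactorial k := by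
    rw [add_comm k, ← ascFactorial_mul_ascFactorial]
    simp [ascFactorial_succ, mul_comm]
  rw [split, split]
  calc a * c * (b * (b + 1) * (b + 2).ascFactorial k)
      = b * a * (c * (b + 1)) * (b + 2).ascFactorial k := by ring
    _ ≤ b * a * (a + 1) * (a + 2).ascFactorial k := by gcongr
    _ = b * (a * (a + 1) * (a + 2).ascFactorial k) := by ring

theorem mul_mul_choose_le {a b c q : ℕ} (hc : c * (b + 1) ≤ a + 1) (hba : b ≤ a) (hq : 2 ≤ q) :
    a * c * (b + q - 1).choose q ≤ b * (a + q - 1).choose q := by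
  obtain ⟨k, rfl⟩ := exists_add_of_le hq
  rw [add_comm 2 k]
  refine le_of_mul_le_mul_left ?_ (k + 2).factorial_pos
  have := mul_mul_ascFactorial_add_two_le hc hba k
  rw [ascFactorial_eq_factorial_mul_choose', ascFactorial_eq_factorial_mul_choose'] at this
  linarith

end Nat

theorem binom_sum_ratio_ge_general (a b d : ℕ) (h : d * (b + d) ≤ a) :
    a * d * ∑ q ∈ Finset.Icc 2 d, Nat.choose (b + q - 1) q ≤
      b * ∑ q ∈ Finset.Icc 2 d, Nat.choose (a + q - 1) q := by
  rw [Finset.mul_sum, Finset.mul_sum]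
  refine Finset.sum_le_sum fun q hq => ?_
  obtain ⟨h2q, hqd⟩ := Finset.mem_Icc.mp hq
  have hc : d * (b + 1) ≤ a + 1 := by nlinarith
  have hba : b ≤ a := by nlinarith
  exact Nat.mul_mul_choose_le hc hba h2q

theorem binom_sum_ratio_ge (a b d : ℕ) (ha : 0 < a) (hb : 0 < b) (hd : 0 < d)
    (h : d * (b + d) ≤ a) :
    a * d * ∑ q ∈ Finset.Icc 2 d, Nat.choose (b + q - 1) q ≤
      b * ∑ q ∈ Finset.Icc 2 d, Nat.choose (a + q - 1) q :=
  binom_sum_ratio_ge_general a b d h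
end

section
/- For all positive integers a, q with q ≥ 2 and a ≥ d(b+d) for positive integers b, d with q ≤ d, one has (1/a) C(a+q-1, q) ≥ (d^{q-1}/b) C(b+q-1, q), i.e., b * C(a+q-1, q) ≥ a * d^{q-1} * C(b+q-1, q). -/
lemma ascFactorial_eq_prod_range' (n k : ℕ) :
    n.ascFactorial k = ∏ i ∈ Finset.range k, (n + i) := by
  induction k with
  | zero => simp
  | succ k ih => rw [Nat.ascFactorial_succ, Finset.prod_range_succ, ih, Nat.mul_comm]

theorem binom_term_ratio_ge (a b d q : ℕ) (ha : 0 < a) (hb : 0 < b) (hd : 0 < d)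
    (hq2 : 2 ≤ q) (hqd : q ≤ d) (h : d * (b + d) ≤ a) :
    a * d ^ (q - 1) * Nat.choose (b + q - 1) q ≤ b * Nat.choose (a + q - 1) q := by
  have hq : 0 < q := by omega
  -- multiply both sides by q!
  have key : a * d ^ (q - 1) * Nat.ascFactorial b q ≤ b * Nat.ascFactorial a q := by
    obtain ⟨r, rfl⟩ : ∃ r, q = r + 1 := ⟨q - 1, by omega⟩
    have split : ∀ n : ℕ, Nat.ascFactorial n (r + 1) =
        n * ∏ i ∈ Finset.range r, (n + 1 + i) := by
      intro n
      rw [ascFactorial_eq_prod_range', Finset.prod_range_succ']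
      simp only [Nat.add_zero]
      rw [Nat.mul_comm]
      congr 1
      apply Finset.prod_congr rfl
      intro i _
      omega
    rw [split a, split b]
    have hdr : d ^ r = ∏ _i ∈ Finset.range r, d := by
      simp
    have main : d ^ r * ∏ i ∈ Finset.range r, (b + 1 + i) ≤
        ∏ i ∈ Finset.range r, (a + 1 + i) := by
      rw [hdr, ← Finset.prod_mul_distrib]
      apply Finset.prod_le_prod
      · intro i _
        positivity
      · intro i hi
        simp only [Finset.mem_range] at hi
        have h1 : d * (1 + i) ≤ d * d := Nat.mul_le_mul_left d (by omega)
        have h2 : d * (b + 1 + i) = d * b + d * (1 + i) := by ring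
        have h3 : d * (b + d) = d * b + d * d := by ring
        omega
    simp only [Nat.add_sub_cancel]
    calc a * d ^ r * (b * ∏ i ∈ Finset.range r, (b + 1 + i))
        = b * (a * (d ^ r * ∏ i ∈ Finset.range r, (b + 1 + i))) := by ring
      _ ≤ b * (a * ∏ i ∈ Finset.range r, (a + 1 + i)) :=
          Nat.mul_le_mul_left b (Nat.mul_le_mul_left a main)
  have hbq : Nat.ascFactorial b q = Nat.factorial q * Nat.choose (b + q - 1) q :=
    Nat.ascFactorial_eq_factorial_mul_choose' b q
  have haq : Nat.ascFactorial a q = Nat.factorial q * Nat.choose (a + q - 1) q :=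
    Nat.ascFactorial_eq_factorial_mul_choose' a q
  rw [hbq, haq] at key
  have hfac : 0 < Nat.factorial q := Nat.factorial_pos q
  refine Nat.le_of_mul_le_mul_left ?_ hfac
  calc Nat.factorial q * (a * d ^ (q - 1) * Nat.choose (b + q - 1) q)
      = a * d ^ (q - 1) * (Nat.factorial q * Nat.choose (b + q - 1) q) := by ring
    _ ≤ b * (Nat.factorial q * Nat.choose (a + q - 1) q) := key
    _ = Nat.factorial q * (b * Nat.choose (a + q - 1) q) := by ring
end

section
/- Let d ≥ 3 and n ≥ d(s+d) for nonnegative integer s and positive integers n, d. Let M = ∑_{q=1}^{d} C(n+q-1, q) and P(s) = ∑_{q=1}^{d} C(s+q-1, q). Then P(s)/M ≤ 2s/(dn), i.e., d*n*P(s) ≤ 2*s*M. -/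
/-!
Bound `P(s)` by its `d` terms, each at most the top one `C(s+d-1, d)`, and `M` below by its top
term `C(n+d-1, d)`. With `d! C(m+d-1, d) = m(m+1)⋯(m+d-1)` it remains to compare rising
factorials: after splitting off the factors `s` and `n`, each of the remaining `d - 1` factors
`s + i` gains a factor `d` and stays below `n + i`, because `d (s + d) ≤ n`; and `d² ≤ d^(d-1)`
for `d ≥ 3`.
-/

open Nat Finset

theorem choose_add_sub_one_le_of_le (s : ℕ) {q d : ℕ} (hq : 1 ≤ q) (hqd : q ≤ d) :
    (s + q - 1).choose q ≤ (s + d - 1).choose d := by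
  rcases s with _ | s
  · rw [choose_eq_zero_of_lt (by omega)]
    exact Nat.zero_le _
  · rw [show s + 1 + q - 1 = s + q by omega, show s + 1 + d - 1 = s + d by omega,
      ← choose_symm_add, ← choose_symm_add]
    exact choose_le_choose s (by omega)

theorem sum_choose_add_sub_one_le (s d : ℕ) :
    ∑ q ∈ Icc 1 d, (s + q - 1).choose q ≤ d * (s + d - 1).choose d := by
  simpa using sum_le_card_nsmul (Icc 1 d) _ _ fun q hq =>
    choose_add_sub_one_le_of_le s (mem_Icc.1 hq).1 (mem_Icc.1 hq).2

theorem pow_mul_ascFactorial_le_ascFactorial {k a b e : ℕ} (h : k * (a + e) ≤ b) :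
    k ^ e * (a + 1).ascFactorial e ≤ b.ascFactorial e :=
  calc k ^ e * (a + 1).ascFactorial e ≤ k ^ e * (a + e) ^ e := by
        gcongr; exact ascFactorial_le_pow_add a e
    _ = (k * (a + e)) ^ e := (mul_pow ..).symm
    _ ≤ b ^ e := by gcongr
    _ ≤ b.ascFactorial e := pow_succ_le_ascFactorial b e

theorem ascFactorial_succ_eq_mul (n k : ℕ) :
    n.ascFactorial (k + 1) = n * (n + 1).ascFactorial k := by
  rw [ascFactorial_succ, succ_ascFactorial]

theorem mul_mul_ascFactorial_le {n d s : ℕ} (hd : 3 ≤ d) (h : d * (s + d) ≤ n) :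
    d * d * n * s.ascFactorial d ≤ s * n.ascFactorial d := by
  obtain ⟨e, rfl⟩ : ∃ e, d = e + 1 := ⟨d - 1, by omega⟩
  have hsq : (e + 1) * (e + 1) ≤ (e + 1) ^ e :=
    calc (e + 1) * (e + 1) = (e + 1) ^ 2 := (sq _).symm
      _ ≤ (e + 1) ^ e := Nat.pow_le_pow_right (by omega) (by omega)
  have hrising : (e + 1) ^ e * (s + 1).ascFactorial e ≤ (n + 1).ascFactorial e :=
    pow_mul_ascFactorial_le_ascFactorial (by nlinarith)
  rw [ascFactorial_succ_eq_mul, ascFactorial_succ_eq_mul]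
  calc (e + 1) * (e + 1) * n * (s * (s + 1).ascFactorial e)
      = (e + 1) * (e + 1) * (s + 1).ascFactorial e * (s * n) := by ring
    _ ≤ (e + 1) ^ e * (s + 1).ascFactorial e * (s * n) := by gcongr
    _ ≤ (n + 1).ascFactorial e * (s * n) := by gcongr
    _ = s * (n * (n + 1).ascFactorial e) := by ring

theorem mul_mul_choose_le {n d s : ℕ} (hd : 3 ≤ d) (h : d * (s + d) ≤ n) :
    d * d * n * (s + d - 1).choose d ≤ s * (n + d - 1).choose d := by
  have hrising := mul_mul_ascFactorial_le hd h
  rw [ascFactorial_eq_factorial_mul_choose', ascFactorial_eq_factorial_mul_choose'] at hrising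
  exact Nat.le_of_mul_le_mul_left (by convert hrising using 1 <;> ring) d.factorial_pos

theorem improved_sparsity_bound_general (n d s : ℕ) (hd : 3 ≤ d)
    (h : d * (s + d) ≤ n) :
    d * n * ∑ q ∈ Finset.Icc 1 d, Nat.choose (s + q - 1) q ≤
      2 * s * ∑ q ∈ Finset.Icc 1 d, Nat.choose (n + q - 1) q := by
  have htop : (n + d - 1).choose d ≤ ∑ q ∈ Icc 1 d, (n + q - 1).choose q :=
    single_le_sum (f := fun q => (n + q - 1).choose q) (fun _ _ => Nat.zero_le _)
      (mem_Icc.2 ⟨by omega, le_rfl⟩)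
  calc d * n * ∑ q ∈ Icc 1 d, (s + q - 1).choose q
      ≤ d * n * (d * (s + d - 1).choose d) := by gcongr; exact sum_choose_add_sub_one_le s d
    _ = d * d * n * (s + d - 1).choose d := by ring
    _ ≤ s * (n + d - 1).choose d := mul_mul_choose_le hd h
    _ ≤ 2 * s * ∑ q ∈ Icc 1 d, (n + q - 1).choose q := Nat.mul_le_mul (by omega) htop

theorem improved_sparsity_bound (n d s : ℕ) (hn : 0 < n) (hd : 3 ≤ d)
    (h : d * (s + d) ≤ n) :
    d * n * ∑ q ∈ Finset.Icc 1 d, Nat.choose (s + q - 1) q ≤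
      2 * s * ∑ q ∈ Finset.Icc 1 d, Nat.choose (n + q - 1) q :=
  improved_sparsity_bound_general n d s hd h
end

section
/- Let A be an N×M real matrix with nonzero columns, mutual coherence μ(A), and W = diag(‖A_1‖₂,...,‖A_M‖₂). For every δ ∈ ℝ^M, ‖Aδ‖₂² ≥ (1 + μ(A))‖Wδ‖₂² − μ(A)‖Wδ‖₁². -/
/-!
Writing `G = AᵀA` for the Gram matrix, `‖Aδ‖₂² = ∑ᵢⱼ δᵢ δⱼ Gᵢⱼ`, where `Gᵢᵢ = wᵢ²` and, by the
definition of the coherence, `|Gᵢⱼ| ≤ μ wᵢ wⱼ` for `i ≠ j`. So each off-diagonal term is at least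
`-μ (wᵢ|δᵢ|)(wⱼ|δⱼ|)`, and adding back the diagonal, `‖Aδ‖₂² ≥ ‖Wδ‖₂² - μ (‖Wδ‖₁² - ‖Wδ‖₂²)`.
-/

open Finset Matrix

theorem Matrix.sum_sq_mulVec_eq_dotProduct_transpose_mul_mulVec {R m n : Type*} [CommSemiring R]
    [Fintype m] [Fintype n] (A : Matrix m n R) (v : n → R) :
    ∑ k, (A *ᵥ v) k ^ 2 = v ⬝ᵥ (Aᵀ * A) *ᵥ v := by
  rw [← mulVec_mulVec, dotProduct_mulVec, vecMul_transpose]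
  simp only [dotProduct, sq]

theorem Real.abs_sum_mul_le_sqrt_mul_sqrt {ι : Type*} (s : Finset ι) (f g : ι → ℝ) :
    |∑ i ∈ s, f i * g i| ≤ √(∑ i ∈ s, f i ^ 2) * √(∑ i ∈ s, g i ^ 2) := by
  rw [← Real.sqrt_mul (sum_nonneg fun _ _ ↦ sq_nonneg _)]
  exact Real.abs_le_sqrt (sum_mul_sq_le_sq_mul_sq s f g)

theorem Matrix.dotProduct_mulVec_ge_of_abs_offDiag_le {n : Type*} [Fintype n] [DecidableEq n]
    (G : Matrix n n ℝ) (w : n → ℝ) (μ : ℝ) (hdiag : ∀ i, G i i = w i ^ 2)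
    (hoff : ∀ i j, i ≠ j → |G i j| ≤ μ * (w i * w j)) (δ : n → ℝ) :
    (1 + μ) * ∑ i, (w i * δ i) ^ 2 - μ * (∑ i, w i * |δ i|) ^ 2 ≤ δ ⬝ᵥ G *ᵥ δ := by
  have hlhs : (1 + μ) * ∑ i, (w i * δ i) ^ 2 - μ * (∑ i, w i * |δ i|) ^ 2 =
      ∑ i, ∑ j, ((if i = j then (1 + μ) * (w i * δ i) ^ 2 else 0) -
        μ * ((w i * |δ i|) * (w j * |δ j|))) := by
    rw [sq (∑ i, w i * |δ i|), sum_mul_sum]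
    simp only [sum_sub_distrib, sum_ite_eq, mem_univ, if_true, mul_sum]
  have hrhs : δ ⬝ᵥ G *ᵥ δ = ∑ i, ∑ j, δ i * (G i j * δ j) := by
    simp only [dotProduct, mulVec, mul_sum]
  rw [hlhs, hrhs]
  refine sum_le_sum fun i _ ↦ sum_le_sum fun j _ ↦ ?_
  by_cases hij : i = j
  · subst hij
    rw [if_pos rfl, hdiag, mul_mul_mul_comm, abs_mul_abs_self]
    linarith
  · rw [if_neg hij]
    have hterm : |δ i * (G i j * δ j)| ≤ μ * ((w i * |δ i|) * (w j * |δ j|)) := by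
      rw [abs_mul, abs_mul]
      calc |δ i| * (|G i j| * |δ j|) ≤ |δ i| * (μ * (w i * w j) * |δ j|) := by
            gcongr; exact hoff i j hij
        _ = μ * ((w i * |δ i|) * (w j * |δ j|)) := by ring
    linarith [neg_abs_le (δ i * (G i j * δ j))]

theorem abs_sum_mul_le_coherence_mul {m n : Type*} [Fintype m] [LinearOrder n]
    {A : Matrix m n ℝ} {μ : ℝ}
    (hμ : μ ∈ upperBounds
      {r : ℝ | ∃ i j : n, i < j ∧
        r = |∑ k, A k i * A k j| /
          (Real.sqrt (∑ k, (A k i) ^ 2) * Real.sqrt (∑ k, (A k j) ^ 2))})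
    {i j : n} (hij : i < j) :
    |∑ k, A k i * A k j| ≤ μ * (√(∑ k, (A k i) ^ 2) * √(∑ k, (A k j) ^ 2)) := by
  have hcs := Real.abs_sum_mul_le_sqrt_mul_sqrt univ (fun k ↦ A k i) (fun k ↦ A k j)
  rcases (mul_nonneg (Real.sqrt_nonneg _) (Real.sqrt_nonneg _)).eq_or_lt with hzero | hpos
  · -- a zero column: Cauchy–Schwarz makes the inner product vanish
    rw [← hzero] at hcs ⊢
    linarith [abs_nonneg (∑ k, A k i * A k j)]
  · exact (div_le_iff₀' hpos).mp (hμ ⟨i, j, hij, rfl⟩) |>.trans_eq (mul_comm _ _)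

theorem mulVec_sq_ge_coherence_bound_general (N M : ℕ) (A : Matrix (Fin N) (Fin M) ℝ)
    (μ : ℝ)
    (hμ : IsGreatest
      {r : ℝ | ∃ i j : Fin M, i < j ∧
        r = |∑ k, A k i * A k j| /
          (Real.sqrt (∑ k, (A k i) ^ 2) * Real.sqrt (∑ k, (A k j) ^ 2))} μ)
    (δ : Fin M → ℝ) :
    (1 + μ) * (∑ i, (Real.sqrt (∑ k, (A k i) ^ 2) * δ i) ^ 2) -
        μ * (∑ i, Real.sqrt (∑ k, (A k i) ^ 2) * |δ i|) ^ 2 ≤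
      ∑ k, (A.mulVec δ k) ^ 2 := by
  set w : Fin M → ℝ := fun i ↦ √(∑ k, (A k i) ^ 2)
  have hdiag : ∀ i, (Aᵀ * A) i i = w i ^ 2 := fun i ↦ by
    rw [Real.sq_sqrt (sum_nonneg fun k _ ↦ sq_nonneg (A k i))]
    simp only [mul_apply, transpose_apply, sq]
  have hoff : ∀ i j, i ≠ j → |(Aᵀ * A) i j| ≤ μ * (w i * w j) := by
    intro i j hij
    simp only [mul_apply, transpose_apply]
    rcases hij.lt_or_gt with hlt | hgt
    · exact abs_sum_mul_le_coherence_mul hμ.2 hlt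
    · simpa only [mul_comm (A _ i), mul_comm (w i)] using abs_sum_mul_le_coherence_mul hμ.2 hgt
  rw [sum_sq_mulVec_eq_dotProduct_transpose_mul_mulVec]
  exact dotProduct_mulVec_ge_of_abs_offDiag_le _ w μ hdiag hoff δ

/-- `‖Aδ‖₂² ≥ (1+μ)‖Wδ‖₂² − μ‖Wδ‖₁²` for any `δ`, where `μ` is the mutual
coherence of `A` and `W` the diagonal matrix of column norms. -/
theorem mulVec_sq_ge_coherence_bound (N M : ℕ) (A : Matrix (Fin N) (Fin M) ℝ)
    (hcols : ∀ i : Fin M, (fun k => A k i) ≠ 0) (μ : ℝ)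
    (hμ : IsGreatest
      {r : ℝ | ∃ i j : Fin M, i < j ∧
        r = |∑ k, A k i * A k j| /
          (Real.sqrt (∑ k, (A k i) ^ 2) * Real.sqrt (∑ k, (A k j) ^ 2))} μ)
    (δ : Fin M → ℝ) :
    (1 + μ) * (∑ i, (Real.sqrt (∑ k, (A k i) ^ 2) * δ i) ^ 2) -
        μ * (∑ i, Real.sqrt (∑ k, (A k i) ^ 2) * |δ i|) ^ 2 ≤
      ∑ k, (A.mulVec δ k) ^ 2 :=
  mulVec_sq_ge_coherence_bound_general N M A μ hμ δ
end

section
/- Suppose φ* is the unique minimizer of the group ℓ0 norm ‖{W_j φ}_{j=1}^n‖₀ subject to Aφ = y − b, and suppose x* = φ^{-1}(φ*) (the first n coordinates of φ*) satisfies the polynomial equations y_i = p_i(x*) for all i. Then x* is a sparsest solution of the polynomial system: every x₀ solving the polynomial system with ‖x₀‖₀ ≤ ‖x*‖₀ equals x*. -/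
/-- If `φ*` is the unique minimizer of the group ℓ0 norm subject to `Aφ = y − b`
and its first `n` coordinates `x*` satisfy the polynomial system, then `x*` is a
sparsest solution of the polynomial system: any solution `x₀` with
`‖x₀‖₀ ≤ ‖x*‖₀` equals `x*`. -/
theorem group_sparse_proxy_for_poly (N M n : ℕ) (hnM : n ≤ M)
    (A : Matrix (Fin N) (Fin M) ℝ) (y b : Fin N → ℝ)
    -- enumeration of the monomial multi-indices, the first `n` being linear
    (e : Fin M → (Fin n → ℕ))
    (he : ∀ j : Fin n, e (Fin.castLE hnM j) = fun j' => if j' = j then 1 else 0)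
    -- precompensating weights with nonzero entries (Assumption 2)
    (w : Fin M → ℝ) (hw : ∀ k, w k ≠ 0)
    -- group ℓ0 norm: number of variables `j` whose group of monomials is nonzero
    (groupL0 : (Fin M → ℝ) → ℕ)
    (hgroupL0 : ∀ φ, groupL0 φ =
      (Finset.univ.filter
        (fun j : Fin n => ∃ k : Fin M, e k j ≠ 0 ∧ w k * φ k ≠ 0)).card)
    (φstar : Fin M → ℝ)
    -- `φ*` is the unique minimizer of the group ℓ0 norm subject to `Aφ = y − b`
    (hfeas : A.mulVec φstar = y - b)
    (hmin : ∀ ψ : Fin M → ℝ, A.mulVec ψ = y - b → ψ ≠ φstar →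
      groupL0 φstar < groupL0 ψ)
    -- `x* = φ^{-1}(φ*)` satisfies the polynomial system
    (hsat : A.mulVec (fun k => ∏ j, φstar (Fin.castLE hnM j) ^ e k j) = y - b) :
    ∀ x₀ : Fin n → ℝ,
      A.mulVec (fun k => ∏ j, x₀ j ^ e k j) = y - b →
      (Finset.univ.filter (fun j => x₀ j ≠ 0)).card ≤
        (Finset.univ.filter (fun j => φstar (Fin.castLE hnM j) ≠ 0)).card →
      x₀ = fun j => φstar (Fin.castLE hnM j) := by
  intro x₀ hx₀ hcard
  -- the monomial lift of a vector, evaluated at a linear index, is the coordinate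
  have hlin : ∀ (x : Fin n → ℝ) (j : Fin n),
      (∏ j', x j' ^ e (Fin.castLE hnM j) j') = x j := by
    intro x j
    simp [he j, pow_ite, Finset.prod_ite_eq' Finset.univ j (fun j' => x j')]
  -- groupL0 of the monomial lift of x equals ‖x‖₀
  have hlift : ∀ x : Fin n → ℝ,
      groupL0 (fun k => ∏ j, x j ^ e k j) =
        (Finset.univ.filter (fun j => x j ≠ 0)).card := by
    intro x
    rw [hgroupL0]
    congr 1
    apply Finset.filter_congr
    intro j _
    constructor
    · rintro ⟨k, hek, hk⟩
      intro hxj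
      apply hk
      have : (∏ j', x j' ^ e k j') = 0 := by
        apply Finset.prod_eq_zero (Finset.mem_univ j)
        simp [hxj, hek]
      simp [this]
    · intro hxj
      refine ⟨Fin.castLE hnM j, ?_, ?_⟩
      · simp [he j]
      · rw [hlin x j]
        exact mul_ne_zero (hw _) hxj
  -- ‖x*‖₀ ≤ groupL0 φstar
  have hstar : (Finset.univ.filter (fun j => φstar (Fin.castLE hnM j) ≠ 0)).card
      ≤ groupL0 φstar := by
    rw [hgroupL0]
    apply Finset.card_le_card
    intro j hj
    rw [Finset.mem_filter] at hj ⊢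
    refine ⟨hj.1, Fin.castLE hnM j, by simp [he j], mul_ne_zero (hw _) hj.2⟩
  -- the lift of x₀ must equal φstar
  by_cases hψ : (fun k => ∏ j, x₀ j ^ e k j) = φstar
  · funext j
    rw [← hlin x₀ j]
    exact congrFun hψ (Fin.castLE hnM j)
  · have h1 := hmin _ hx₀ hψ
    rw [hlift x₀] at h1
    omega
end

section
/- Let A have nonzero columns and mutual coherence μ(A); let x₀ ∈ ℝ^n and e₀ ∈ ℝ^N satisfy y = Aφ(x₀) + b + e₀ with ‖e₀‖₂ ≤ ε, and suppose ‖x₀‖₀ < (n/(4M))(1 + 1/μ(A)). Then x̂ = φ^{-1}(φ̂), where φ̂ minimizes ‖Wφ‖₁ subject to ‖Aφ + b − y‖₂ ≤ ε, satisfies ‖x̂ − x₀‖₂² ≤ 4ε²/(1 − μ(A)(4M‖x₀‖₀/n − 1)), assuming the stability theorem of Donoho–Elad–Temlyakov for linear basis pursuit denoising: if ‖φ₀‖₀ < (1/4)(1 + 1/μ(A)) then ‖φ̂ − φ₀‖₂² ≤ 4ε²/(1 − μ(A)(4‖φ₀‖₀ − 1)). -/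
/-- absorption identity: `m * C(m+r, r) = (r+1) * C(m+r, r+1)`. -/
lemma absorb (m r : ℕ) : m * (m + r).choose r = (r + 1) * (m + r).choose (r + 1) := by
  cases m with
  | zero =>
    simp [Nat.choose_eq_zero_of_lt (Nat.lt_succ_self r)]
  | succ p =>
    have h1 : (p + r).succ * (p + r).choose r = (p + r).succ.choose (r + 1) * (r + 1) :=
      Nat.add_one_mul_choose_eq (p + r) r
    have h2 : (p + r).succ * (p + r).choose p = (p + r).succ.choose (p + 1) * (p + 1) :=
      Nat.add_one_mul_choose_eq (p + r) p
    have hs1 : (p + r).choose p = (p + r).choose r := by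
      have := Nat.choose_symm (n := p + r) (k := r) (Nat.le_add_left r p)
      simpa using this
    have hs2 : (p + r + 1).choose (p + 1) = (p + r + 1).choose r := by
      have := Nat.choose_symm (n := p + r + 1) (k := r) (by omega)
      have h3 : p + r + 1 - r = p + 1 := by omega
      rwa [h3] at this
    have hpr : p + 1 + r = p + r + 1 := by omega
    simp only [Nat.succ_eq_add_one] at h1 h2
    rw [hpr]
    calc (p + 1) * (p + r + 1).choose r
        = (p + 1) * (p + r + 1).choose (p + 1) := by rw [hs2]
      _ = (p + r + 1) * (p + r).choose p := by
          rw [mul_comm ((p+r+1).choose (p+1)) (p+1)] at h2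
          omega
      _ = (p + r + 1) * (p + r).choose r := by rw [hs1]
      _ = (r + 1) * (p + r + 1).choose (r + 1) := by
          rw [mul_comm ((p+r+1).choose (r+1)) (r+1)] at h1
          omega

lemma mc_mono (n s r : ℕ) (h : s ≤ n) :
    n * Nat.multichoose s (r + 1) ≤ s * Nat.multichoose n (r + 1) := by
  rw [Nat.multichoose_eq, Nat.multichoose_eq]
  have e1 : s + (r + 1) - 1 = s + r := by omega
  have e2 : n + (r + 1) - 1 = n + r := by omega
  rw [e1, e2]
  have key : (r + 1) * (n * (s + r).choose (r + 1)) ≤ (r + 1) * (s * (n + r).choose (r + 1)) := by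
    calc (r + 1) * (n * (s + r).choose (r + 1))
        = n * ((r + 1) * (s + r).choose (r + 1)) := by ring
      _ = n * (s * (s + r).choose r) := by rw [← absorb]
      _ ≤ n * (s * (n + r).choose r) := by
          exact Nat.mul_le_mul_left _ (Nat.mul_le_mul_left _
            (Nat.choose_le_choose _ (by omega)))
      _ = s * (n * (n + r).choose r) := by ring
      _ = s * ((r + 1) * (n + r).choose (r + 1)) := by rw [← absorb]
      _ = (r + 1) * (s * (n + r).choose (r + 1)) := by ring
  exact Nat.le_of_mul_le_mul_left key (Nat.succ_pos r)


noncomputable def tupleSym (m q : ℕ) : {f : Fin m → ℕ // ∑ i, f i = q} ≃ Sym (Fin m) q where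
  toFun f := ⟨Finsupp.toMultiset (Finsupp.equivFunOnFinite.symm f.1), by
    rw [Finsupp.card_toMultiset, Finsupp.sum_fintype _ _ (fun _ => rfl)]
    simpa using f.2⟩
  invFun σ := ⟨Finsupp.equivFunOnFinite (Multiset.toFinsupp σ.1), by
    have h := Multiset.toFinsupp_sum_eq σ.1
    rw [Finsupp.sum_fintype _ _ (fun _ => rfl)] at h
    simp only [id] at h
    show ∑ i, (Multiset.toFinsupp σ.1) i = q
    rw [h, σ.2]⟩
  left_inv f := by ext i; simp
  right_inv σ := by ext; simp

lemma tuple_card_le {M m q : ℕ} (F : Finset (Fin M)) (β : Fin M → (Fin m → ℕ))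
    (hsum : ∀ k ∈ F, ∑ i, β k i = q) (hinj : ∀ k ∈ F, ∀ k' ∈ F, β k = β k' → k = k') :
    F.card ≤ Nat.multichoose m q := by
  rw [← Sym.card_sym_fin_eq_multichoose, ← Fintype.card_coe]
  apply Fintype.card_le_of_injective
    (fun k => tupleSym m q ⟨β k.1, hsum k.1 k.2⟩)
  intro k k' h
  have h2 := (tupleSym m q).injective h
  exact Subtype.ext (hinj k.1 k.2 k'.1 k'.2 (congrArg Subtype.val h2))

lemma count_main {M n d : ℕ} (e : Fin M → (Fin n → ℕ)) (hinj : Function.Injective e)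
    (hrange : ∀ α : Fin n → ℕ, (1 ≤ ∑ j, α j ∧ ∑ j, α j ≤ d) ↔ ∃ k, e k = α)
    (S : Finset (Fin n)) :
    n * (Finset.univ.filter (fun k : Fin M => ∀ j, e k j ≠ 0 → j ∈ S)).card ≤ S.card * M := by
  classical
  have hsn : S.card ≤ n := by
    simpa using Finset.card_le_univ S
  have hdeg : ∀ k : Fin M, 1 ≤ ∑ j, e k j ∧ ∑ j, e k j ≤ d :=
    fun k => (hrange (e k)).mpr ⟨k, rfl⟩
  set KS : Finset (Fin M) := Finset.univ.filter (fun k => ∀ j, e k j ≠ 0 → j ∈ S) with hKSdef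
  have hKS : KS.card = ∑ q ∈ Finset.Icc 1 d,
      (KS.filter (fun k => ∑ j, e k j = q)).card :=
    Finset.card_eq_sum_card_fiberwise (fun k _ => Finset.mem_Icc.mpr (hdeg k))
  have hM : M = ∑ q ∈ Finset.Icc 1 d,
      ((Finset.univ : Finset (Fin M)).filter (fun k => ∑ j, e k j = q)).card := by
    have := Finset.card_eq_sum_card_fiberwise
      (s := (Finset.univ : Finset (Fin M))) (t := Finset.Icc 1 d)
      (f := fun k => ∑ j, e k j) (fun k _ => Finset.mem_Icc.mpr (hdeg k))
    simpa using this
  -- pointwise bound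
  have point : ∀ q ∈ Finset.Icc 1 d,
      n * (KS.filter (fun k => ∑ j, e k j = q)).card ≤
        S.card * ((Finset.univ : Finset (Fin M)).filter (fun k => ∑ j, e k j = q)).card := by
    intro q hq
    obtain ⟨hq1, hqd⟩ := Finset.mem_Icc.mp hq
    obtain ⟨r, rfl⟩ : ∃ r, q = r + 1 := ⟨q - 1, by omega⟩
    -- upper bound on the restricted fiber
    have hA : (KS.filter (fun k => ∑ j, e k j = r + 1)).card ≤ Nat.multichoose S.card (r + 1) := by
      apply tuple_card_le _ (fun k i => e k ((S.equivFin.symm i : {x // x ∈ S}) : Fin n))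
      · intro k hk
        obtain ⟨hk1, hk2⟩ := Finset.mem_filter.mp hk
        have hk1' : ∀ j, e k j ≠ 0 → j ∈ S := by
          have := Finset.mem_filter.mp hk1
          exact this.2
        have e1 : ∑ i : Fin S.card, e k ((S.equivFin.symm i : {x // x ∈ S}) : Fin n)
            = ∑ a : {x // x ∈ S}, e k (a : Fin n) := by
          simpa using Equiv.sum_comp S.equivFin.symm (fun a : {x // x ∈ S} => e k (a : Fin n))
        have e2 : ∑ a : {x // x ∈ S}, e k (a : Fin n) = ∑ j ∈ S, e k j :=
          Finset.sum_coe_sort S (fun j => e k j)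
        have e3 : ∑ j ∈ S, e k j = ∑ j, e k j := by
          apply Finset.sum_subset (Finset.subset_univ S)
          intro j _ hj
          by_contra h0
          exact hj (hk1' j h0)
        rw [e1, e2, e3, hk2]
      · intro k hk k' hk' hβ
        have hk1' : ∀ j, e k j ≠ 0 → j ∈ S :=
          (Finset.mem_filter.mp (Finset.mem_filter.mp hk).1).2
        have hk2' : ∀ j, e k' j ≠ 0 → j ∈ S :=
          (Finset.mem_filter.mp (Finset.mem_filter.mp hk').1).2
        apply hinj
        funext j
        by_cases hj : j ∈ S
        · have := congrFun hβ (S.equivFin ⟨j, hj⟩)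
          simpa using this
        · have h1 : e k j = 0 := by by_contra h0; exact hj (hk1' j h0)
          have h2 : e k' j = 0 := by by_contra h0; exact hj (hk2' j h0)
          rw [h1, h2]
    -- lower bound on the full fiber
    have hB : Nat.multichoose n (r + 1) ≤
        ((Finset.univ : Finset (Fin M)).filter (fun k => ∑ j, e k j = r + 1)).card := by
      rw [← Sym.card_sym_fin_eq_multichoose, ← Fintype.card_coe]
      have hex : ∀ σ : Sym (Fin n) (r + 1), ∃ k, e k = ((tupleSym n (r + 1)).symm σ : Fin n → ℕ) := by
        intro σ
        apply (hrange _).mp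
        constructor
        · rw [((tupleSym n (r + 1)).symm σ).2]; omega
        · rw [((tupleSym n (r + 1)).symm σ).2]; exact hqd
      apply Fintype.card_le_of_injective (fun σ =>
        (⟨(hex σ).choose, by
          simp only [Finset.mem_filter, Finset.mem_univ, true_and]
          rw [(hex σ).choose_spec, ((tupleSym n (r + 1)).symm σ).2]⟩ :
          {k // k ∈ (Finset.univ : Finset (Fin M)).filter (fun k => ∑ j, e k j = r + 1)}))
      intro σ σ' h
      have h1 := (hex σ).choose_spec
      have h2 := (hex σ').choose_spec
      have : ((tupleSym n (r + 1)).symm σ : Fin n → ℕ)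
          = ((tupleSym n (r + 1)).symm σ' : Fin n → ℕ) := by
        rw [← h1, ← h2]
        exact congrArg (fun x => e x.1) h
      have := Subtype.ext this
      exact (tupleSym n (r + 1)).symm.injective this
    calc n * (KS.filter (fun k => ∑ j, e k j = r + 1)).card
        ≤ n * Nat.multichoose S.card (r + 1) := Nat.mul_le_mul_left _ hA
      _ ≤ S.card * Nat.multichoose n (r + 1) := mc_mono n S.card r hsn
      _ ≤ S.card * _ := Nat.mul_le_mul_left _ hB
  calc n * KS.card = ∑ q ∈ Finset.Icc 1 d, n * (KS.filter (fun k => ∑ j, e k j = q)).card := by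
        rw [hKS, Finset.mul_sum]
    _ ≤ ∑ q ∈ Finset.Icc 1 d,
        S.card * ((Finset.univ : Finset (Fin M)).filter (fun k => ∑ j, e k j = q)).card :=
        Finset.sum_le_sum point
    _ = S.card * ∑ q ∈ Finset.Icc 1 d,
        ((Finset.univ : Finset (Fin M)).filter (fun k => ∑ j, e k j = q)).card :=
        (Finset.mul_sum _ _ _).symm
    _ = S.card * M := by rw [← hM]



/-- Stability of polynomial ℓ1 basis pursuit denoising: under the sparsity
condition `‖x₀‖₀ < (n/(4M))(1 + 1/μ)` and assuming the Donoho–Elad–Temlyakov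
stability theorem for linear BPDN, the estimate `x̂ = φ^{-1}(φ̂)` satisfies
`‖x̂ − x₀‖₂² ≤ 4ε²/(1 − μ(4M‖x₀‖₀/n − 1))`. -/
theorem poly_bpdn_stability (N M n d : ℕ) (hn : 0 < n) (hd : 0 < d) (hnM : n ≤ M)
    (A : Matrix (Fin N) (Fin M) ℝ)
    (hcols : ∀ i : Fin M, (fun k => A k i) ≠ 0) (μ : ℝ)
    (hμ : IsGreatest
      {r : ℝ | ∃ i j : Fin M, i < j ∧
        r = |∑ k, A k i * A k j| /
          (Real.sqrt (∑ k, (A k i) ^ 2) * Real.sqrt (∑ k, (A k j) ^ 2))} μ)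
    -- enumeration of all multi-indices of degree 1 to d, the first `n` linear
    (e : Fin M → (Fin n → ℕ)) (hinj : Function.Injective e)
    (hrange : ∀ α : Fin n → ℕ,
      (1 ≤ ∑ j, α j ∧ ∑ j, α j ≤ d) ↔ ∃ k : Fin M, e k = α)
    (he : ∀ j : Fin n, e (Fin.castLE hnM j) = fun j' => if j' = j then 1 else 0)
    (y b : Fin N → ℝ) (ε : ℝ) (hε : 0 < ε)
    (x₀ : Fin n → ℝ) (e₀ : Fin N → ℝ)
    (hmodel : y = A.mulVec (fun k => ∏ j, x₀ j ^ e k j) + b + e₀)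
    (hnoise : Real.sqrt (∑ i, (e₀ i) ^ 2) ≤ ε)
    (hsparse : ((Finset.univ.filter (fun j => x₀ j ≠ 0)).card : ℝ) <
      (n : ℝ) / (4 * M) * (1 + 1 / μ))
    (φhat : Fin M → ℝ)
    -- `φ̂` minimizes `‖Wφ‖₁` subject to `‖Aφ + b − y‖₂ ≤ ε`
    (hhatfeas : Real.sqrt (∑ i, (A.mulVec φhat i + b i - y i) ^ 2) ≤ ε)
    (hhatmin : ∀ ψ : Fin M → ℝ,
      Real.sqrt (∑ i, (A.mulVec ψ i + b i - y i) ^ 2) ≤ ε →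
      ∑ k, Real.sqrt (∑ i, (A i k) ^ 2) * |φhat k| ≤
        ∑ k, Real.sqrt (∑ i, (A i k) ^ 2) * |ψ k|)
    -- the Donoho–Elad–Temlyakov stability theorem for linear BPDN
    (hDET : ∀ φ₀ : Fin M → ℝ,
      Real.sqrt (∑ i, (A.mulVec φ₀ i + b i - y i) ^ 2) ≤ ε →
      (((Finset.univ.filter (fun k => φ₀ k ≠ 0)).card : ℝ) <
        (1 / 4) * (1 + 1 / μ)) →
      ∑ k, (φhat k - φ₀ k) ^ 2 ≤
        4 * ε ^ 2 /
          (1 - μ * (4 * ((Finset.univ.filter (fun k => φ₀ k ≠ 0)).card : ℝ) - 1))) :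
    ∑ j, (φhat (Fin.castLE hnM j) - x₀ j) ^ 2 ≤
      4 * ε ^ 2 /
        (1 - μ * (4 * M * ((Finset.univ.filter (fun j => x₀ j ≠ 0)).card : ℝ) / n - 1)) := by
  set φ₀ : Fin M → ℝ := fun k => ∏ j, x₀ j ^ e k j with hφ₀
  set S : Finset (Fin n) := Finset.univ.filter (fun j => x₀ j ≠ 0) with hS
  -- feasibility of `φ₀`
  have hresid : ∀ i, A.mulVec φ₀ i + b i - y i = -e₀ i := by
    intro i
    have h := congrFun hmodel i
    simp only [Pi.add_apply] at h
    rw [h]; ring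
  have hfeas : Real.sqrt (∑ i, (A.mulVec φ₀ i + b i - y i) ^ 2) ≤ ε := by
    calc Real.sqrt (∑ i, (A.mulVec φ₀ i + b i - y i) ^ 2)
        = Real.sqrt (∑ i, (e₀ i) ^ 2) := by
          congr 1
          exact Finset.sum_congr rfl (fun i _ => by rw [hresid i]; ring)
      _ ≤ ε := hnoise
  -- support bound
  have hsub : (Finset.univ.filter (fun k => φ₀ k ≠ 0)) ⊆
      (Finset.univ.filter (fun k : Fin M => ∀ j, e k j ≠ 0 → j ∈ S)) := by
    intro k hk
    simp only [Finset.mem_filter, Finset.mem_univ, true_and] at hk ⊢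
    intro j hj
    simp only [hS, Finset.mem_filter, Finset.mem_univ, true_and]
    intro hx0
    apply hk
    show ∏ j', x₀ j' ^ e k j' = 0
    apply Finset.prod_eq_zero (Finset.mem_univ j)
    rw [hx0]
    exact zero_pow hj
  have hcount : n * (Finset.univ.filter (fun k => φ₀ k ≠ 0)).card ≤ S.card * M :=
    le_trans (Nat.mul_le_mul_left n (Finset.card_le_card hsub)) (count_main e hinj hrange S)
  have hn' : (0:ℝ) < n := by exact_mod_cast hn
  have hM' : (0:ℝ) < M := by exact_mod_cast lt_of_lt_of_le hn hnM
  have htR : ((Finset.univ.filter (fun k => φ₀ k ≠ 0)).card : ℝ) ≤ (M : ℝ) * S.card / n := by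
    rw [le_div_iff₀ hn']
    calc ((Finset.univ.filter (fun k => φ₀ k ≠ 0)).card : ℝ) * n
        = ((n * (Finset.univ.filter (fun k => φ₀ k ≠ 0)).card : ℕ) : ℝ) := by push_cast; ring
      _ ≤ ((S.card * M : ℕ) : ℝ) := by exact_mod_cast hcount
      _ = (M : ℝ) * S.card := by push_cast; ring
  have hμ0 : 0 ≤ μ := by
    obtain ⟨i, j, hij, hr⟩ := hμ.1
    rw [hr]; positivity
  have hkey : (M:ℝ) * S.card / n < (1 + 1/μ) / 4 := by
    have h1 : (M:ℝ)/n * S.card < (M:ℝ)/n * ((n:ℝ)/(4*M) * (1 + 1/μ)) :=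
      mul_lt_mul_of_pos_left hsparse (by positivity)
    have h2 : (M:ℝ)/n * ((n:ℝ)/(4*M) * (1 + 1/μ)) = (1 + 1/μ)/4 := by
      field_simp
    have h3 : (M:ℝ) * S.card / n = (M:ℝ)/n * S.card := by ring
    rw [h3]
    rw [h2] at h1
    exact h1
  have ht4 : ((Finset.univ.filter (fun k => φ₀ k ≠ 0)).card : ℝ) < 1/4 * (1 + 1/μ) := by
    calc ((Finset.univ.filter (fun k => φ₀ k ≠ 0)).card : ℝ)
        ≤ (M:ℝ) * S.card / n := htR
      _ < (1 + 1/μ)/4 := hkey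
      _ = 1/4 * (1 + 1/μ) := by ring
  have hbound := hDET φ₀ hfeas ht4
  have e4 : (4:ℝ) * M * S.card / n = 4 * ((M:ℝ) * S.card / n) := by ring
  have hden2 : (0:ℝ) < 1 - μ * (4 * (M:ℝ) * S.card / n - 1) := by
    have hlt : μ * (4 * (M:ℝ) * S.card / n - 1) < 1 := by
      rcases eq_or_lt_of_le hμ0 with h0 | hpos
      · rw [← h0]; norm_num
      · have h5 : 4 * (M:ℝ) * S.card / n - 1 < 1/μ := by
          have h6 := mul_lt_mul_of_pos_left hkey (by norm_num : (0:ℝ) < 4)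
          have h7 : 4 * (((1:ℝ) + 1/μ)/4) = 1 + 1/μ := by ring
          rw [h7] at h6
          linarith [e4]
        calc μ * (4 * (M:ℝ) * S.card / n - 1) < μ * (1/μ) :=
              mul_lt_mul_of_pos_left h5 hpos
          _ = 1 := by field_simp
    linarith
  have hden1 : 1 - μ * (4 * (M:ℝ) * S.card / n - 1) ≤
      1 - μ * (4 * ((Finset.univ.filter (fun k => φ₀ k ≠ 0)).card : ℝ) - 1) := by
    have h8 : μ * (4 * ((Finset.univ.filter (fun k => φ₀ k ≠ 0)).card : ℝ) - 1) ≤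
        μ * (4 * (M:ℝ) * S.card / n - 1) := by
      apply mul_le_mul_of_nonneg_left _ hμ0
      linarith [htR, e4]
    linarith
  have hx : ∀ j : Fin n, φ₀ (Fin.castLE hnM j) = x₀ j := by
    intro j
    show ∏ j', x₀ j' ^ e (Fin.castLE hnM j) j' = x₀ j
    rw [he j]
    calc ∏ j', x₀ j' ^ (if j' = j then 1 else 0)
        = ∏ j', (if j' = j then x₀ j' else 1) :=
          Finset.prod_congr rfl (fun j' _ => by split <;> simp)
      _ = x₀ j := by simp
  have hleft : ∑ j, (φhat (Fin.castLE hnM j) - x₀ j) ^ 2 ≤ ∑ k, (φhat k - φ₀ k) ^ 2 := by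
    calc ∑ j, (φhat (Fin.castLE hnM j) - x₀ j) ^ 2
        = ∑ j, (φhat (Fin.castLE hnM j) - φ₀ (Fin.castLE hnM j)) ^ 2 :=
          Finset.sum_congr rfl (fun j _ => by rw [hx j])
      _ = ∑ k ∈ Finset.univ.map (Fin.castLEEmb hnM), (φhat k - φ₀ k) ^ 2 := by
          rw [Finset.sum_map]
          rfl
      _ ≤ ∑ k, (φhat k - φ₀ k) ^ 2 :=
          Finset.sum_le_sum_of_subset_of_nonneg (Finset.subset_univ _)
            (fun k _ _ => sq_nonneg _)
  calc ∑ j, (φhat (Fin.castLE hnM j) - x₀ j) ^ 2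
      ≤ ∑ k, (φhat k - φ₀ k) ^ 2 := hleft
    _ ≤ 4 * ε ^ 2 /
        (1 - μ * (4 * ((Finset.univ.filter (fun k => φ₀ k ≠ 0)).card : ℝ) - 1)) := hbound
    _ ≤ 4 * ε ^ 2 / (1 - μ * (4 * (M:ℝ) * S.card / n - 1)) :=
        div_le_div_of_nonneg_left (by positivity) hden2 hden1
end
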